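/- Let n ∈ ℕ, let (y_j)_{j=1}^n be an orthonormal sequence of independent, mean-zero random variables in L²([0,1]), and let a,γ > 0 be such that Prob(|x| ≥ a‖x‖_{L²}) ≥ γ for all x ∈ span(y_j)_{j=1}^n. For t ∈ [0,1] let v_t = (y₁(t),…,y_n(t)) ∈ ℓ₂ⁿ and let (e_j)_{j=1}^n be the standard unit vector basis of ℓ₂ⁿ. Then the family (2^{-1/2} v_t)_{t∈[0,1]} ∪ (2^{-1/2} e_j)_{j=1}^n is a continuous Parseval frame of ℓ₂ⁿ, and for all x,y ∈ ℓ₂ⁿ: min(‖x−y‖, ‖x+y‖) ≤ 6a⁻¹γ⁻¹ ( Σ_{j=1}^n (|⟨x,e_j⟩| − |⟨y,e_j⟩|)² + ∫₀¹ (|⟨x,v_t⟩| − |⟨y,v_t⟩|)² dt )^{1/2}. -/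

import Mathlib

open MeasureTheory ProbabilityTheory

noncomputable section

/-- Lebesgue measure on `[0,1]`, viewed as a probability space. -/
def μ01 : Measure ℝ := volume.restrict (Set.Icc 0 1)

instance : IsProbabilityMeasure μ01 := ⟨by simp [μ01]⟩

/-- `min |p-q| |p+q| ≤ ||p|-|q||` -/
lemma aux_min_abs_le (p q : ℝ) : min |p - q| |p + q| ≤ |(|p| - |q|)| := by
  rcases le_total 0 (p * q) with h | h
  · refine le_trans (min_le_left _ _) (le_of_eq ?_)
    rw [← Real.sqrt_sq_eq_abs, ← Real.sqrt_sq_eq_abs (|p| - |q|)]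
    congr 1
    have h1 : |p| * |q| = p * q := by rw [← abs_mul, abs_of_nonneg h]
    nlinarith [sq_abs p, sq_abs q]
  · refine le_trans (min_le_right _ _) (le_of_eq ?_)
    rw [← Real.sqrt_sq_eq_abs, ← Real.sqrt_sq_eq_abs (|p| - |q|)]
    congr 1
    have h1 : |p| * |q| = -(p * q) := by rw [← abs_mul, abs_of_nonpos h]
    nlinarith [sq_abs p, sq_abs q]

lemma aux_integrable_mul {α : Type*} [MeasurableSpace α] {μ : Measure α} {f g : α → ℝ}
    (hf : MemLp f 2 μ) (hg : MemLp g 2 μ) : Integrable (fun t => f t * g t) μ := by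
  refine (hf.integrable_sq.add hg.integrable_sq).mono'
    (hf.aestronglyMeasurable.mul hg.aestronglyMeasurable) ?_
  filter_upwards with t
  simp only [Real.norm_eq_abs, abs_mul, Pi.add_apply]
  nlinarith [sq_nonneg (|f t| - |g t|), sq_abs (f t), sq_abs (g t), abs_nonneg (f t),
    abs_nonneg (g t)]

lemma aux_integral_cs {α : Type*} [MeasurableSpace α] {μ : Measure α} (f g : α → ℝ)
    (hf : MemLp f 2 μ) (hg : MemLp g 2 μ) :
    ∫ t, f t * g t ∂μ ≤ Real.sqrt (∫ t, f t ^ 2 ∂μ) * Real.sqrt (∫ t, g t ^ 2 ∂μ) := by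
  have hfg : Integrable (fun t => f t * g t) μ := aux_integrable_mul hf hg
  set A := ∫ t, f t ^ 2 ∂μ with hAdef
  set B := ∫ t, g t ^ 2 ∂μ with hBdef
  have hA : 0 ≤ A := integral_nonneg fun t => sq_nonneg _
  have hB : 0 ≤ B := integral_nonneg fun t => sq_nonneg _
  have hzero : ∀ h : α → ℝ, MemLp h 2 μ → (∫ t, h t ^ 2 ∂μ) = 0 → h =ᵐ[μ] 0 := by
    intro h hh h0
    have := (integral_eq_zero_iff_of_nonneg (fun t => sq_nonneg (h t)) hh.integrable_sq).mp h0
    filter_upwards [this] with t ht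
    exact pow_eq_zero_iff (two_ne_zero) |>.mp ht
  rcases eq_or_lt_of_le hA with hA0 | hA0
  · have hf0 : f =ᵐ[μ] 0 := hzero f hf hA0.symm
    have : ∫ t, f t * g t ∂μ = 0 :=
      integral_eq_zero_of_ae (by filter_upwards [hf0] with t ht; simp [ht])
    rw [this, ← hA0, Real.sqrt_zero, zero_mul]
  rcases eq_or_lt_of_le hB with hB0 | hB0
  · have hg0 : g =ᵐ[μ] 0 := hzero g hg hB0.symm
    have : ∫ t, f t * g t ∂μ = 0 :=
      integral_eq_zero_of_ae (by filter_upwards [hg0] with t ht; simp [ht])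
    rw [this, ← hB0, Real.sqrt_zero, mul_zero]
  set sa := Real.sqrt A with hsa
  set sb := Real.sqrt B with hsb
  have hsa0 : 0 < sa := Real.sqrt_pos.2 hA0
  have hsb0 : 0 < sb := Real.sqrt_pos.2 hB0
  have ha2 : sa ^ 2 = A := Real.sq_sqrt hA
  have hb2 : sb ^ 2 = B := Real.sq_sqrt hB
  have expand : ∫ t, (sb * f t - sa * g t) ^ 2 ∂μ =
      sb ^ 2 * A - 2 * (sa * sb) * (∫ t, f t * g t ∂μ) + sa ^ 2 * B := by
    have hpt : ∀ t, (sb * f t - sa * g t) ^ 2 =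
        sb ^ 2 * f t ^ 2 - 2 * (sa * sb) * (f t * g t) + sa ^ 2 * g t ^ 2 := fun t => by ring
    simp_rw [hpt]
    have i1 : Integrable (fun t => sb ^ 2 * f t ^ 2) μ := hf.integrable_sq.const_mul _
    have i2 : Integrable (fun t => 2 * (sa * sb) * (f t * g t)) μ := hfg.const_mul _
    have i3 : Integrable (fun t => sa ^ 2 * g t ^ 2) μ := hg.integrable_sq.const_mul _
    have i12 : Integrable (fun t => sb ^ 2 * f t ^ 2 - 2 * (sa * sb) * (f t * g t)) μ := i1.sub i2
    rw [integral_add i12 i3, integral_sub i1 i2, integral_const_mul, integral_const_mul,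
      integral_const_mul]
  have h0 : 0 ≤ ∫ t, (sb * f t - sa * g t) ^ 2 ∂μ := integral_nonneg fun t => sq_nonneg _
  rw [expand] at h0
  nlinarith [h0, mul_pos hsa0 hsb0]

lemma aux_integral_mink {α : Type*} [MeasurableSpace α] {μ : Measure α} (f g : α → ℝ)
    (hf : MemLp f 2 μ) (hg : MemLp g 2 μ) :
    Real.sqrt (∫ t, (f t + g t) ^ 2 ∂μ) ≤
      Real.sqrt (∫ t, f t ^ 2 ∂μ) + Real.sqrt (∫ t, g t ^ 2 ∂μ) := by
  have hC := aux_integral_cs f g hf hg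
  have hfg : Integrable (fun t => f t * g t) μ := aux_integrable_mul hf hg
  have expand : ∫ t, (f t + g t) ^ 2 ∂μ =
      (∫ t, f t ^ 2 ∂μ) + 2 * (∫ t, f t * g t ∂μ) + ∫ t, g t ^ 2 ∂μ := by
    have hpt : ∀ t, (f t + g t) ^ 2 = f t ^ 2 + 2 * (f t * g t) + g t ^ 2 := fun t => by ring
    simp_rw [hpt]
    have i2 : Integrable (fun t => 2 * (f t * g t)) μ := hfg.const_mul _
    have i12 : Integrable (fun t => f t ^ 2 + 2 * (f t * g t)) μ := hf.integrable_sq.add i2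
    rw [integral_add i12 hg.integrable_sq, integral_add hf.integrable_sq i2, integral_const_mul]
  have hA : 0 ≤ Real.sqrt (∫ t, f t ^ 2 ∂μ) := Real.sqrt_nonneg _
  have hB : 0 ≤ Real.sqrt (∫ t, g t ^ 2 ∂μ) := Real.sqrt_nonneg _
  have ha2 : (Real.sqrt (∫ t, f t ^ 2 ∂μ)) ^ 2 = ∫ t, f t ^ 2 ∂μ :=
    Real.sq_sqrt (integral_nonneg fun t => sq_nonneg _)
  have hb2 : (Real.sqrt (∫ t, g t ^ 2 ∂μ)) ^ 2 = ∫ t, g t ^ 2 ∂μ :=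
    Real.sq_sqrt (integral_nonneg fun t => sq_nonneg _)
  calc Real.sqrt (∫ t, (f t + g t) ^ 2 ∂μ)
      ≤ Real.sqrt ((Real.sqrt (∫ t, f t ^ 2 ∂μ) + Real.sqrt (∫ t, g t ^ 2 ∂μ)) ^ 2) := by
        apply Real.sqrt_le_sqrt; rw [expand]; nlinarith
    _ = _ := Real.sqrt_sq (by positivity)

lemma aux_sum_mink {n : ℕ} (p q : Fin n → ℝ) :
    Real.sqrt (∑ j, (p j + q j) ^ 2) ≤
      Real.sqrt (∑ j, p j ^ 2) + Real.sqrt (∑ j, q j ^ 2) := by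
  have hC : ∑ j, p j * q j ≤ Real.sqrt (∑ j, p j ^ 2) * Real.sqrt (∑ j, q j ^ 2) := by
    have h1 := Finset.sum_mul_sq_le_sq_mul_sq Finset.univ p q
    have h2 : ∑ j, p j * q j ≤ |∑ j, p j * q j| := le_abs_self _
    rw [← Real.sqrt_sq_eq_abs] at h2
    calc ∑ j, p j * q j ≤ Real.sqrt ((∑ j, p j * q j) ^ 2) := h2
      _ ≤ Real.sqrt ((∑ j, p j ^ 2) * ∑ j, q j ^ 2) := Real.sqrt_le_sqrt h1
      _ = _ := Real.sqrt_mul (Finset.sum_nonneg fun j _ => sq_nonneg _) _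
  have ha2 : (Real.sqrt (∑ j, p j ^ 2)) ^ 2 = ∑ j, p j ^ 2 :=
    Real.sq_sqrt (Finset.sum_nonneg fun j _ => sq_nonneg _)
  have hb2 : (Real.sqrt (∑ j, q j ^ 2)) ^ 2 = ∑ j, q j ^ 2 :=
    Real.sq_sqrt (Finset.sum_nonneg fun j _ => sq_nonneg _)
  calc Real.sqrt (∑ j, (p j + q j) ^ 2)
      ≤ Real.sqrt ((Real.sqrt (∑ j, p j ^ 2) + Real.sqrt (∑ j, q j ^ 2)) ^ 2) := by
        apply Real.sqrt_le_sqrt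
        have : ∑ j, (p j + q j) ^ 2 = (∑ j, p j ^ 2) + 2 * (∑ j, p j * q j) + ∑ j, q j ^ 2 := by
          rw [Finset.mul_sum, ← Finset.sum_add_distrib, ← Finset.sum_add_distrib]
          exact Finset.sum_congr rfl fun j _ => by ring
        rw [this]; nlinarith
    _ = _ := Real.sqrt_sq (by positivity)

lemma aux_min_shift (p q p' q' : ℝ) :
    min |p'| |q'| ≤ min |p| |q| + |p - p'| + |q - q'| := by
  have h1 : |p'| - |p| ≤ |p - p'| := by rw [abs_sub_comm]; exact abs_sub_abs_le_abs_sub _ _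
  have h2 : |q'| - |q| ≤ |q - q'| := by rw [abs_sub_comm]; exact abs_sub_abs_le_abs_sub _ _
  rcases le_total |p| |q| with hh | hh
  · have h3 := min_le_left |p'| |q'|
    have h4 := abs_nonneg (q - q')
    rw [min_eq_left hh]; linarith
  · have h3 := min_le_right |p'| |q'|
    have h4 := abs_nonneg (p - p')
    rw [min_eq_right hh]; linarith

lemma aux_L2sum {n : ℕ} (y : Fin n → ℝ → ℝ) (h_L2 : ∀ j, MemLp (y j) 2 μ01)
    (c : Fin n → ℝ) : MemLp (fun t => ∑ j, c j * y j t) 2 μ01 := by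
  have : (fun t => ∑ j, c j * y j t) = ∑ j : Fin n, fun t => c j * y j t := by
    funext t; simp
  rw [this]
  exact memLp_finset_sum' _ fun j _ => (h_L2 j).const_mul _

lemma aux_IntSum {n : ℕ} (y : Fin n → ℝ → ℝ) (h_L2 : ∀ j, MemLp (y j) 2 μ01)
    (h_on : ∀ i j, ∫ t, y i t * y j t ∂μ01 = if i = j then 1 else 0) (c d : Fin n → ℝ) :
    ∫ t, (∑ i, c i * y i t) * (∑ j, d j * y j t) ∂μ01 = ∑ i, c i * d i := by
  have hmul : ∀ i j, Integrable (fun t => y i t * y j t) μ01 :=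
    fun i j => aux_integrable_mul (h_L2 i) (h_L2 j)
  have hpt : ∀ t, (∑ i, c i * y i t) * (∑ j, d j * y j t)
      = ∑ i, ∑ j, c i * d j * (y i t * y j t) := by
    intro t
    rw [Finset.sum_mul_sum]
    exact Finset.sum_congr rfl fun i _ => Finset.sum_congr rfl fun j _ => by ring
  simp_rw [hpt]
  rw [integral_finset_sum _ fun i _ => integrable_finset_sum _ fun j _ => (hmul i j).const_mul _]
  refine Finset.sum_congr rfl fun i _ => ?_
  rw [integral_finset_sum _ fun j _ => (hmul i j).const_mul _]
  have h1 : ∀ j : Fin n, ∫ t, c i * d j * (y i t * y j t) ∂μ01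
      = if i = j then c i * d j else 0 := by
    intro j
    rw [integral_const_mul, h_on i j]
    split_ifs <;> ring
  simp_rw [h1]
  simp [Finset.sum_ite_eq]

lemma aux_IntSq {n : ℕ} (y : Fin n → ℝ → ℝ) (h_L2 : ∀ j, MemLp (y j) 2 μ01)
    (h_on : ∀ i j, ∫ t, y i t * y j t ∂μ01 = if i = j then 1 else 0) (c : Fin n → ℝ) :
    ∫ t, (∑ j, c j * y j t) ^ 2 ∂μ01 = ∑ j, c j ^ 2 := by
  have := aux_IntSum y h_L2 h_on c c
  simpa [pow_two] using this

set_option maxHeartbeats 1000000 in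
lemma aux_key {n : ℕ} (y : Fin n → ℝ → ℝ) (h_meas : ∀ j, Measurable (y j))
    (h_L2 : ∀ j, MemLp (y j) 2 μ01)
    (h_on : ∀ i j, ∫ t, y i t * y j t ∂μ01 = if i = j then 1 else 0)
    (h_indep : iIndepFun y μ01)
    (a γ : ℝ) (ha : 0 < a) (hγ : 0 < γ)
    (h_prob : ∀ c : Fin n → ℝ,
      ENNReal.ofReal γ ≤
        μ01 {t | a * Real.sqrt (∫ s, (∑ j, c j * y j s) ^ 2 ∂μ01) ≤ |∑ j, c j * y j t|})
    (x z : EuclideanSpace ℝ (Fin n)) (hxz : ‖x - z‖ ≤ ‖x + z‖) :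
    ‖x - z‖ ≤ 6 * a⁻¹ * γ⁻¹ *
      Real.sqrt ((∑ j, (|x j| - |z j|) ^ 2) +
        ∫ t, (|∑ i, x i * y i t| - |∑ i, z i * y i t|) ^ 2 ∂μ01) := by
  classical
  set S := ∑ j, (|x j| - |z j|) ^ 2 with hSdef
  set I := ∫ t, (|∑ i, x i * y i t| - |∑ i, z i * y i t|) ^ 2 ∂μ01 with hIdef
  have hS0 : 0 ≤ S := Finset.sum_nonneg fun j _ => sq_nonneg _
  have hI0 : 0 ≤ I := integral_nonneg fun t => sq_nonneg _
  set R := Real.sqrt (S + I) with hRdef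
  have hR0 : 0 ≤ R := Real.sqrt_nonneg _
  have hSR : Real.sqrt S ≤ R := Real.sqrt_le_sqrt (by linarith)
  have hIR : Real.sqrt I ≤ R := Real.sqrt_le_sqrt (by linarith)
  rcases Nat.eq_zero_or_pos n with hn | hn
  · subst hn
    have hx0 : ‖x - z‖ = 0 := by simp [EuclideanSpace.norm_eq]
    rw [hx0]
    exact mul_nonneg (by positivity) hR0
  -- derive a * γ ≤ 1 and γ ≤ 1
  have i0 : Fin n := ⟨0, hn⟩
  set c0 : Fin n → ℝ := fun j => if j = i0 then 1 else 0 with hc0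
  have hsum0 : ∀ t, ∑ j, c0 j * y j t = y i0 t := by
    intro t
    simp [hc0, ite_mul, Finset.sum_ite_eq']
  have hval0 : (∫ s, (∑ j, c0 j * y j s) ^ 2 ∂μ01) = 1 := by
    rw [aux_IntSq y h_L2 h_on c0]
    have : ∀ j, c0 j ^ 2 = if j = i0 then 1 else 0 := by
      intro j; simp only [hc0]; split_ifs <;> norm_num
    simp_rw [this]
    simp [Finset.sum_ite_eq']
  have hPE0 := h_prob c0
  have hE0' : {t | a * Real.sqrt (∫ s, (∑ j, c0 j * y j s) ^ 2 ∂μ01) ≤ |∑ j, c0 j * y j t|}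
      = {t | a ≤ |y i0 t|} := by
    ext t
    simp [hval0, hsum0 t]
  rw [hE0'] at hPE0
  have hmeasE : MeasurableSet {t | a ≤ |y i0 t|} :=
    measurableSet_le measurable_const (h_meas i0).abs
  have hγ1 : γ ≤ 1 := ENNReal.ofReal_le_one.mp (le_trans hPE0 prob_le_one)
  have hPreal : γ ≤ (μ01 {t | a ≤ |y i0 t|}).toReal := by
    have := ENNReal.toReal_mono (measure_ne_top μ01 _) hPE0
    rwa [ENNReal.toReal_ofReal hγ.le] at this
  have ha2γ : a ^ 2 * γ ≤ 1 := by
    have hle1 : a ^ 2 * (μ01 {t | a ≤ |y i0 t|}).toReal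
        ≤ ∫ t in {t | a ≤ |y i0 t|}, (y i0 t) ^ 2 ∂μ01 := by
      have hc : ∫ t in {t | a ≤ |y i0 t|}, a ^ 2 ∂μ01
          = (μ01 {t | a ≤ |y i0 t|}).toReal * a ^ 2 := by
        rw [setIntegral_const, smul_eq_mul, measureReal_def]
      calc a ^ 2 * (μ01 {t | a ≤ |y i0 t|}).toReal
          = ∫ t in {t | a ≤ |y i0 t|}, a ^ 2 ∂μ01 := by rw [hc]; ring
        _ ≤ _ := by
            refine setIntegral_mono_on (integrableOn_const (measure_ne_top _ _))
              ((h_L2 i0).integrable_sq.integrableOn) hmeasE (fun t ht => ?_)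
            have h1 : a ≤ |y i0 t| := ht
            nlinarith [sq_abs (y i0 t), abs_nonneg (y i0 t)]
    have hle2 : ∫ t in {t | a ≤ |y i0 t|}, (y i0 t) ^ 2 ∂μ01 ≤ ∫ t, (y i0 t) ^ 2 ∂μ01 :=
      setIntegral_le_integral (h_L2 i0).integrable_sq (by filter_upwards with t; exact sq_nonneg _)
    have hy2 : ∫ t, (y i0 t) ^ 2 ∂μ01 = 1 := by simpa [pow_two] using h_on i0 i0
    nlinarith [mul_le_mul_of_nonneg_left hPreal (sq_nonneg a)]
  have haγ1 : a * γ ≤ 1 := by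
    nlinarith [mul_le_mul_of_nonneg_right ha2γ hγ.le, sq_nonneg (a * γ - 1)]
  have haγpos : 0 < a * γ := mul_pos ha hγ
  have hinv : 1 ≤ (a * γ)⁻¹ := (one_le_inv₀ haγpos).mpr haγ1
  -- coordinate vectors
  set u : Fin n → ℝ := fun j => x j - z j with hu
  set w : Fin n → ℝ := fun j => x j + z j with hw
  have hnormu : ‖x - z‖ = Real.sqrt (∑ j, u j ^ 2) := by
    rw [EuclideanSpace.norm_eq]
    congr 1
    refine Finset.sum_congr rfl fun j _ => ?_
    simp [hu, Real.norm_eq_abs, sq_abs]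
  have hnormw : ‖x + z‖ = Real.sqrt (∑ j, w j ^ 2) := by
    rw [EuclideanSpace.norm_eq]
    congr 1
    refine Finset.sum_congr rfl fun j _ => ?_
    simp [hw, Real.norm_eq_abs, sq_abs]
  set J : Finset (Fin n) := Finset.univ.filter (fun j => |u j| ≤ |w j|) with hJ
  set c1 : Fin n → ℝ := fun j => if j ∈ J then 0 else u j with hc1
  set c2 : Fin n → ℝ := fun j => if j ∈ J then w j else 0 with hc2
  have hS1 : ∑ j, (u j - c1 j) ^ 2 ≤ S := by
    rw [hSdef]
    refine Finset.sum_le_sum fun j _ => ?_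
    by_cases hj : j ∈ J
    · have heq : u j - c1 j = u j := by simp [hc1, hj]
      have hj' : |u j| ≤ |w j| := by
        have := Finset.mem_filter.mp (hJ ▸ hj)
        exact this.2
      have hmin := aux_min_abs_le (x j) (z j)
      have e1 : x j - z j = u j := by simp [hu]
      have e2 : x j + z j = w j := by simp [hw]
      rw [e1, e2, min_eq_left hj'] at hmin
      rw [heq]
      nlinarith [mul_self_le_mul_self (abs_nonneg (u j)) hmin, sq_abs (u j),
        sq_abs (|x j| - |z j|), abs_nonneg (|x j| - |z j|)]
    · have heq : u j - c1 j = 0 := by simp [hc1, hj]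
      rw [heq]
      simpa using sq_nonneg (|x j| - |z j|)
  have hS2 : ∑ j, (w j - c2 j) ^ 2 ≤ S := by
    rw [hSdef]
    refine Finset.sum_le_sum fun j _ => ?_
    by_cases hj : j ∈ J
    · have heq : w j - c2 j = 0 := by simp [hc2, hj]
      rw [heq]
      simpa using sq_nonneg (|x j| - |z j|)
    · have heq : w j - c2 j = w j := by simp [hc2, hj]
      have hj' : |w j| ≤ |u j| := by
        have : ¬ (|u j| ≤ |w j|) := by
          intro hcon
          exact hj (hJ ▸ (Finset.mem_filter.mpr ⟨Finset.mem_univ _, hcon⟩))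
        linarith [le_of_not_ge this]
      have hmin := aux_min_abs_le (x j) (z j)
      have e1 : x j - z j = u j := by simp [hu]
      have e2 : x j + z j = w j := by simp [hw]
      rw [e1, e2, min_eq_right hj'] at hmin
      rw [heq]
      nlinarith [mul_self_le_mul_self (abs_nonneg (w j)) hmin, sq_abs (w j),
        sq_abs (|x j| - |z j|), abs_nonneg (|x j| - |z j|)]
  -- triangle inequalities
  have htri1 : Real.sqrt (∑ j, u j ^ 2) ≤ Real.sqrt (∑ j, c1 j ^ 2) + Real.sqrt S := by
    have h := aux_sum_mink c1 (fun j => u j - c1 j)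
    have he : ∀ j, (c1 j + (u j - c1 j)) ^ 2 = u j ^ 2 := fun j => by ring
    simp_rw [he] at h
    have h2 : Real.sqrt (∑ j, (u j - c1 j) ^ 2) ≤ Real.sqrt S := Real.sqrt_le_sqrt hS1
    linarith
  have htri2 : Real.sqrt (∑ j, w j ^ 2) ≤ Real.sqrt (∑ j, c2 j ^ 2) + Real.sqrt S := by
    have h := aux_sum_mink c2 (fun j => w j - c2 j)
    have he : ∀ j, (c2 j + (w j - c2 j)) ^ 2 = w j ^ 2 := fun j => by ring
    simp_rw [he] at h
    have h2 : Real.sqrt (∑ j, (w j - c2 j) ^ 2) ≤ Real.sqrt S := Real.sqrt_le_sqrt hS2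
    linarith
  have hUW : Real.sqrt (∑ j, u j ^ 2) ≤ Real.sqrt (∑ j, w j ^ 2) := by
    rw [hnormu, hnormw] at hxz
    exact hxz
  have hr1 : Real.sqrt (∑ j, u j ^ 2) - Real.sqrt S ≤ Real.sqrt (∑ j, c1 j ^ 2) := by linarith
  have hr2 : Real.sqrt (∑ j, u j ^ 2) - Real.sqrt S ≤ Real.sqrt (∑ j, c2 j ^ 2) := by linarith
  rw [hnormu]
  by_cases hD : Real.sqrt (∑ j, u j ^ 2) - Real.sqrt S ≤ 0
  · calc Real.sqrt (∑ j, u j ^ 2) ≤ R := by linarith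
      _ ≤ 6 * (a * γ)⁻¹ * R := by nlinarith
      _ = 6 * a⁻¹ * γ⁻¹ * R := by rw [mul_inv]; ring
  push_neg at hD
  -- L² memberships
  have hq1L2 : MemLp (fun t => ∑ j, (u j - c1 j) * y j t) 2 μ01 := aux_L2sum y h_L2 _
  have hq2L2 : MemLp (fun t => ∑ j, (w j - c2 j) * y j t) 2 μ01 := aux_L2sum y h_L2 _
  have hfL2 : MemLp (fun t => ∑ i, x i * y i t) 2 μ01 := aux_L2sum y h_L2 (fun j => x j)
  have hgL2 : MemLp (fun t => ∑ i, z i * y i t) 2 μ01 := aux_L2sum y h_L2 (fun j => z j)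
  have hmL2 : MemLp (fun t => |(|∑ i, x i * y i t| - |∑ i, z i * y i t|)|) 2 μ01 :=
    (hfL2.abs.sub hgL2.abs).abs
  have habsq : MemLp
      (fun t => |∑ j, (u j - c1 j) * y j t| + |∑ j, (w j - c2 j) * y j t|) 2 μ01 :=
    hq1L2.abs.add hq2L2.abs
  -- measurability
  have hmF : Measurable (fun t => ∑ j, c1 j * y j t) :=
    Finset.measurable_sum _ fun j _ => (h_meas j).const_mul _
  have hmG : Measurable (fun t => ∑ j, c2 j * y j t) :=
    Finset.measurable_sum _ fun j _ => (h_meas j).const_mul _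
  -- independence
  have hindFG : IndepFun (fun t => ∑ j, c1 j * y j t) (fun t => ∑ j, c2 j * y j t) μ01 := by
    have hbase := ProbabilityTheory.iIndepFun.indepFun_finset Jᶜ J disjoint_compl_left
      h_indep h_meas
    have hφ1 : Measurable fun v : (↥(Jᶜ : Finset (Fin n)) → ℝ) => ∑ i, c1 i.1 * v i :=
      Finset.measurable_sum _ fun i _ => (measurable_pi_apply i).const_mul _
    have hφ2 : Measurable fun v : (↥(J : Finset (Fin n)) → ℝ) => ∑ i, c2 i.1 * v i :=
      Finset.measurable_sum _ fun i _ => (measurable_pi_apply i).const_mul _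
    have hcomp := hbase.comp hφ1 hφ2
    have e1 : ((fun v : (↥(Jᶜ : Finset (Fin n)) → ℝ) => ∑ i, c1 i.1 * v i)
        ∘ (fun t (i : ↥(Jᶜ : Finset (Fin n))) => y i.1 t)) = fun t => ∑ j, c1 j * y j t := by
      funext t
      simp only [Function.comp_apply]
      rw [Finset.sum_coe_sort (Jᶜ) (fun j => c1 j * y j t)]
      refine Finset.sum_subset (Finset.subset_univ _) fun j _ hj => ?_
      have hjJ : j ∈ J := by simpa using hj
      simp [hc1, hjJ]
    have e2 : ((fun v : (↥(J : Finset (Fin n)) → ℝ) => ∑ i, c2 i.1 * v i)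
        ∘ (fun t (i : ↥(J : Finset (Fin n))) => y i.1 t)) = fun t => ∑ j, c2 j * y j t := by
      funext t
      simp only [Function.comp_apply]
      rw [Finset.sum_coe_sort J (fun j => c2 j * y j t)]
      refine Finset.sum_subset (Finset.subset_univ _) fun j _ hj => ?_
      simp [hc2, hj]
    rwa [e1, e2] at hcomp
  -- probability of the intersection
  have hPA := h_prob c1
  have hPB := h_prob c2
  have hmsA : MeasurableSet
      {r : ℝ | a * Real.sqrt (∫ s, (∑ j, c1 j * y j s) ^ 2 ∂μ01) ≤ |r|} :=
    measurableSet_le measurable_const measurable_abs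
  have hmsB : MeasurableSet
      {r : ℝ | a * Real.sqrt (∫ s, (∑ j, c2 j * y j s) ^ 2 ∂μ01) ≤ |r|} :=
    measurableSet_le measurable_const measurable_abs
  have hABmul := hindFG.measure_inter_preimage_eq_mul _ _ hmsA hmsB
  set AB := {t | a * Real.sqrt (∫ s, (∑ j, c1 j * y j s) ^ 2 ∂μ01) ≤ |∑ j, c1 j * y j t|}
    ∩ {t | a * Real.sqrt (∫ s, (∑ j, c2 j * y j s) ^ 2 ∂μ01) ≤ |∑ j, c2 j * y j t|} with hABdef
  have hPγ2 : γ * γ ≤ (μ01 AB).toReal := by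
    have h1 : ENNReal.ofReal (γ * γ) ≤ μ01 AB := by
      have hh : μ01 AB = μ01 {t | a * Real.sqrt (∫ s, (∑ j, c1 j * y j s) ^ 2 ∂μ01)
          ≤ |∑ j, c1 j * y j t|} * μ01 {t | a * Real.sqrt (∫ s, (∑ j, c2 j * y j s) ^ 2 ∂μ01)
          ≤ |∑ j, c2 j * y j t|} := hABmul
      rw [hh, ENNReal.ofReal_mul hγ.le]
      exact mul_le_mul' hPA hPB
    have h2 := ENNReal.toReal_mono (measure_ne_top μ01 _) h1
    rwa [ENNReal.toReal_ofReal (by positivity)] at h2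
  have hmAB : MeasurableSet AB := (hmF hmsA).inter (hmG hmsB)
  -- pointwise lower bound on AB
  have hvals1 : (∫ s, (∑ j, c1 j * y j s) ^ 2 ∂μ01) = ∑ j, c1 j ^ 2 :=
    aux_IntSq y h_L2 h_on c1
  have hvals2 : (∫ s, (∑ j, c2 j * y j s) ^ 2 ∂μ01) = ∑ j, c2 j ^ 2 :=
    aux_IntSq y h_L2 h_on c2
  have hpt : ∀ t ∈ AB, a * (Real.sqrt (∑ j, u j ^ 2) - Real.sqrt S) ≤
      |(|∑ i, x i * y i t| - |∑ i, z i * y i t|)|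
        + (|∑ j, (u j - c1 j) * y j t| + |∑ j, (w j - c2 j) * y j t|) := by
    intro t ht
    obtain ⟨htA, htB⟩ := ht
    have h1 : a * (Real.sqrt (∑ j, u j ^ 2) - Real.sqrt S) ≤ |∑ j, c1 j * y j t| := by
      refine le_trans ?_ htA
      rw [hvals1]
      exact mul_le_mul_of_nonneg_left hr1 ha.le
    have h2 : a * (Real.sqrt (∑ j, u j ^ 2) - Real.sqrt S) ≤ |∑ j, c2 j * y j t| := by
      refine le_trans ?_ htB
      rw [hvals2]
      exact mul_le_mul_of_nonneg_left hr2 ha.le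
    have h3 := aux_min_shift (∑ j, u j * y j t) (∑ j, w j * y j t)
      (∑ j, c1 j * y j t) (∑ j, c2 j * y j t)
    have e1 : ∑ j, u j * y j t - ∑ j, c1 j * y j t = ∑ j, (u j - c1 j) * y j t := by
      rw [← Finset.sum_sub_distrib]
      exact Finset.sum_congr rfl fun j _ => by ring
    have e2 : ∑ j, w j * y j t - ∑ j, c2 j * y j t = ∑ j, (w j - c2 j) * y j t := by
      rw [← Finset.sum_sub_distrib]
      exact Finset.sum_congr rfl fun j _ => by ring
    have e3 : ∑ j, u j * y j t = (∑ i, x i * y i t) - (∑ i, z i * y i t) := by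
      rw [← Finset.sum_sub_distrib]
      refine Finset.sum_congr rfl fun j _ => ?_
      have : u j = x j - z j := by simp [hu]
      rw [this]; ring
    have e4 : ∑ j, w j * y j t = (∑ i, x i * y i t) + (∑ i, z i * y i t) := by
      rw [← Finset.sum_add_distrib]
      refine Finset.sum_congr rfl fun j _ => ?_
      have : w j = x j + z j := by simp [hw]
      rw [this]; ring
    have h4 : min |∑ j, u j * y j t| |∑ j, w j * y j t|
        ≤ |(|∑ i, x i * y i t| - |∑ i, z i * y i t|)| := by
      rw [e3, e4]
      exact aux_min_abs_le _ _
    rw [e1, e2] at h3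
    have h5 := le_min h1 h2
    have h6 : |∑ j, (u j - c1 j) * y j t| ≥ 0 := abs_nonneg _
    have h7 : |∑ j, (w j - c2 j) * y j t| ≥ 0 := abs_nonneg _
    linarith [h3, h4, h5]
  -- the integral chain
  set mabs : ℝ → ℝ := fun t => |(|∑ i, x i * y i t| - |∑ i, z i * y i t|)| with hmabs
  set qabs : ℝ → ℝ := fun t =>
    |∑ j, (u j - c1 j) * y j t| + |∑ j, (w j - c2 j) * y j t| with hqabs
  have hmfunL2 : MemLp (fun t => mabs t + qabs t) 2 μ01 := hmL2.add habsq
  have haD : 0 ≤ a * (Real.sqrt (∑ j, u j ^ 2) - Real.sqrt S) := mul_nonneg ha.le hD.le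
  have hchain1 : (a * (Real.sqrt (∑ j, u j ^ 2) - Real.sqrt S)) ^ 2 * (μ01 AB).toReal
      ≤ ∫ t in AB, (mabs t + qabs t) ^ 2 ∂μ01 := by
    calc (a * (Real.sqrt (∑ j, u j ^ 2) - Real.sqrt S)) ^ 2 * (μ01 AB).toReal
        = ∫ _t in AB, (a * (Real.sqrt (∑ j, u j ^ 2) - Real.sqrt S)) ^ 2 ∂μ01 := by
          rw [setIntegral_const, smul_eq_mul, measureReal_def]; ring
      _ ≤ _ := by
          refine setIntegral_mono_on (integrableOn_const (measure_ne_top _ _))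
            (hmfunL2.integrable_sq.integrableOn) hmAB (fun t ht => ?_)
          have h' : a * (Real.sqrt (∑ j, u j ^ 2) - Real.sqrt S) ≤ mabs t + qabs t := by
            simpa [hmabs, hqabs] using hpt t ht
          exact pow_le_pow_left₀ haD h' 2
  have hchain2 : ∫ t in AB, (mabs t + qabs t) ^ 2 ∂μ01 ≤ ∫ t, (mabs t + qabs t) ^ 2 ∂μ01 :=
    setIntegral_le_integral hmfunL2.integrable_sq (by filter_upwards with t; positivity)
  have hmk1 := aux_integral_mink mabs qabs hmL2 habsq
  have hmk2 := aux_integral_mink (fun t => |∑ j, (u j - c1 j) * y j t|)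
    (fun t => |∑ j, (w j - c2 j) * y j t|) hq1L2.abs hq2L2.abs
  have eI : ∫ t, mabs t ^ 2 ∂μ01 = I := by
    rw [hIdef, hmabs]
    simp_rw [sq_abs]
  have eq1 : ∫ t, (|∑ j, (u j - c1 j) * y j t|) ^ 2 ∂μ01 = ∑ j, (u j - c1 j) ^ 2 := by
    simp_rw [sq_abs]
    exact aux_IntSq y h_L2 h_on _
  have eq2 : ∫ t, (|∑ j, (w j - c2 j) * y j t|) ^ 2 ∂μ01 = ∑ j, (w j - c2 j) ^ 2 := by
    simp_rw [sq_abs]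
    exact aux_IntSq y h_L2 h_on _
  have hbig : Real.sqrt (∫ t, (mabs t + qabs t) ^ 2 ∂μ01)
      ≤ Real.sqrt I + 2 * Real.sqrt S := by
    have hsq1 : Real.sqrt (∫ t, (|∑ j, (u j - c1 j) * y j t|) ^ 2 ∂μ01) ≤ Real.sqrt S := by
      rw [eq1]; exact Real.sqrt_le_sqrt hS1
    have hsq2 : Real.sqrt (∫ t, (|∑ j, (w j - c2 j) * y j t|) ^ 2 ∂μ01) ≤ Real.sqrt S := by
      rw [eq2]; exact Real.sqrt_le_sqrt hS2
    rw [eI] at hmk1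
    have hq : Real.sqrt (∫ t, qabs t ^ 2 ∂μ01) ≤ 2 * Real.sqrt S := by
      have : Real.sqrt (∫ t, qabs t ^ 2 ∂μ01)
          ≤ Real.sqrt (∫ t, (|∑ j, (u j - c1 j) * y j t|) ^ 2 ∂μ01)
            + Real.sqrt (∫ t, (|∑ j, (w j - c2 j) * y j t|) ^ 2 ∂μ01) := hmk2
      linarith
    linarith
  have hkey : a * (Real.sqrt (∑ j, u j ^ 2) - Real.sqrt S) * γ
      ≤ Real.sqrt I + 2 * Real.sqrt S := by
    have hγP : γ ≤ Real.sqrt ((μ01 AB).toReal) := by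
      calc γ = Real.sqrt (γ * γ) := (Real.sqrt_mul_self hγ.le).symm
        _ ≤ _ := Real.sqrt_le_sqrt hPγ2
    have h1 : a * (Real.sqrt (∑ j, u j ^ 2) - Real.sqrt S) * γ
        ≤ a * (Real.sqrt (∑ j, u j ^ 2) - Real.sqrt S) * Real.sqrt ((μ01 AB).toReal) :=
      mul_le_mul_of_nonneg_left hγP haD
    have h2 : a * (Real.sqrt (∑ j, u j ^ 2) - Real.sqrt S) * Real.sqrt ((μ01 AB).toReal)
        = Real.sqrt ((a * (Real.sqrt (∑ j, u j ^ 2) - Real.sqrt S)) ^ 2 * (μ01 AB).toReal) := by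
      rw [Real.sqrt_mul (sq_nonneg _), Real.sqrt_sq haD]
    have h3 : Real.sqrt ((a * (Real.sqrt (∑ j, u j ^ 2) - Real.sqrt S)) ^ 2 * (μ01 AB).toReal)
        ≤ Real.sqrt (∫ t, (mabs t + qabs t) ^ 2 ∂μ01) :=
      Real.sqrt_le_sqrt (le_trans hchain1 hchain2)
    linarith [hbig]
  have h4R : a * γ * Real.sqrt (∑ j, u j ^ 2) ≤ 4 * R := by
    nlinarith [hkey, hIR, hSR, Real.sqrt_nonneg S, haγ1, hR0, mul_pos ha hγ,
      Real.sqrt_nonneg (∑ j, u j ^ 2)]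
  calc Real.sqrt (∑ j, u j ^ 2)
      = (a * γ)⁻¹ * (a * γ * Real.sqrt (∑ j, u j ^ 2)) :=
        (inv_mul_cancel_left₀ (ne_of_gt haγpos) _).symm
    _ ≤ (a * γ)⁻¹ * (4 * R) := mul_le_mul_of_nonneg_left h4R (inv_nonneg.mpr haγpos.le)
    _ ≤ 6 * a⁻¹ * γ⁻¹ * R := by
        rw [mul_inv]
        nlinarith [mul_nonneg (mul_nonneg (inv_nonneg.mpr ha.le) (inv_nonneg.mpr hγ.le)) hR0]

/-- Theorem 4.2: if `(yⱼ)_{j=1}^n` is an orthonormal sequence of independent mean-zero random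
variables on `[0,1]` with `Prob(|x| ≥ a‖x‖_{L²}) ≥ γ` on its span, and `v_t = (y₁(t),…,y_n(t))`,
then `(2^{-1/2} v_t)_{t∈[0,1]} ∪ (2^{-1/2} eⱼ)` is a continuous Parseval frame of `ℓ₂ⁿ` which does
`6a⁻¹γ⁻¹`-stable phase retrieval. -/
theorem continuous_parseval_frame_stable_phase_retrieval
    (n : ℕ) (y : Fin n → ℝ → ℝ) (h_meas : ∀ j, Measurable (y j))
    (h_L2 : ∀ j, MemLp (y j) 2 μ01)
    (h_on : ∀ i j, ∫ t, y i t * y j t ∂μ01 = if i = j then 1 else 0)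
    (h_indep : iIndepFun y μ01)
    (h_mean : ∀ j, ∫ t, y j t ∂μ01 = 0)
    (a γ : ℝ) (ha : 0 < a) (hγ : 0 < γ)
    (h_prob : ∀ c : Fin n → ℝ,
      ENNReal.ofReal γ ≤
        μ01 {t | a * Real.sqrt (∫ s, (∑ j, c j * y j s) ^ 2 ∂μ01) ≤ |∑ j, c j * y j t|}) :
    -- `(2^{-1/2} v_t)_{t∈[0,1]} ∪ (2^{-1/2} eⱼ)_{j=1}^n` is a continuous Parseval frame of `ℓ₂ⁿ`:
    (∀ x : EuclideanSpace ℝ (Fin n),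
      (∫ t, ((Real.sqrt 2)⁻¹ * ∑ i, x i * y i t) ^ 2 ∂μ01) +
        ∑ j, ((Real.sqrt 2)⁻¹ * x j) ^ 2 = ‖x‖ ^ 2) ∧
    -- and it does `6a⁻¹γ⁻¹`-stable phase retrieval:
    (∀ x z : EuclideanSpace ℝ (Fin n),
      min ‖x - z‖ ‖x + z‖ ≤ 6 * a⁻¹ * γ⁻¹ *
        Real.sqrt ((∑ j, (|x j| - |z j|) ^ 2) +
          ∫ t, (|∑ i, x i * y i t| - |∑ i, z i * y i t|) ^ 2 ∂μ01)) := by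
  constructor
  · intro x
    have hint : ∫ t, ((Real.sqrt 2)⁻¹ * ∑ i, x i * y i t) ^ 2 ∂μ01
        = 2⁻¹ * ∑ i, x i ^ 2 := by
      have hpt : ∀ t, ((Real.sqrt 2)⁻¹ * ∑ i, x i * y i t) ^ 2
          = 2⁻¹ * (∑ i, x i * y i t) ^ 2 := by
        intro t
        rw [mul_pow, inv_pow, Real.sq_sqrt (by norm_num : (0:ℝ) ≤ 2)]
      simp_rw [hpt]
      rw [integral_const_mul]
      have := aux_IntSq y h_L2 h_on (fun j => x j)
      rw [this]
    have hsum : ∑ j, ((Real.sqrt 2)⁻¹ * x j) ^ 2 = 2⁻¹ * ∑ j, x j ^ 2 := by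
      rw [Finset.mul_sum]
      refine Finset.sum_congr rfl fun j _ => ?_
      rw [mul_pow, inv_pow, Real.sq_sqrt (by norm_num : (0:ℝ) ≤ 2)]
    have hnorm : ‖x‖ ^ 2 = ∑ i, x i ^ 2 := by
      rw [EuclideanSpace.norm_eq, Real.sq_sqrt (Finset.sum_nonneg fun i _ => sq_nonneg _)]
      exact Finset.sum_congr rfl fun i _ => by rw [Real.norm_eq_abs, sq_abs]
    rw [hint, hsum, hnorm]
    ring
  · intro x z
    rcases le_total ‖x - z‖ ‖x + z‖ with h | h
    · rw [min_eq_left h]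
      exact aux_key y h_meas h_L2 h_on h_indep a γ ha hγ h_prob x z h
    · rw [min_eq_right h]
      have h' : ‖x - -z‖ ≤ ‖x + -z‖ := by
        rw [sub_neg_eq_add, ← sub_eq_add_neg]
        exact h
      have hk := aux_key y h_meas h_L2 h_on h_indep a γ ha hγ h_prob x (-z) h'
      rw [sub_neg_eq_add] at hk
      have e1 : ∑ j, (|x j| - |(-z : EuclideanSpace ℝ (Fin n)) j|) ^ 2
          = ∑ j, (|x j| - |z j|) ^ 2 := by
        refine Finset.sum_congr rfl fun j _ => ?_
        have : (-z : EuclideanSpace ℝ (Fin n)) j = -(z j) := rfl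
        rw [this, abs_neg]
      have e2 : ∫ t, (|∑ i, x i * y i t| - |∑ i, (-z : EuclideanSpace ℝ (Fin n)) i * y i t|) ^ 2 ∂μ01
          = ∫ t, (|∑ i, x i * y i t| - |∑ i, z i * y i t|) ^ 2 ∂μ01 := by
        have hpt : ∀ t, (|∑ i, x i * y i t| - |∑ i, (-z : EuclideanSpace ℝ (Fin n)) i * y i t|) ^ 2
            = (|∑ i, x i * y i t| - |∑ i, z i * y i t|) ^ 2 := by
          intro t
          have hneg : ∑ i, (-z : EuclideanSpace ℝ (Fin n)) i * y i t = -∑ i, z i * y i t := by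
            rw [← Finset.sum_neg_distrib]
            refine Finset.sum_congr rfl fun i _ => ?_
            have : (-z : EuclideanSpace ℝ (Fin n)) i = -(z i) := rfl
            rw [this]; ring
          rw [hneg, abs_neg]
        simp_rw [hpt]
      rw [e1, e2] at hk
      exact hk
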